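/- Let L be a first-order language all of whose symbols are function symbols, with no nullary and no unary function symbols and only finitely many function symbols in total, and let 𝒜 be an orderly L-algebra. If 𝒜 is Ramsey, then for every reduction ℬ of 𝒜, every n ∈ ℕ, and every X ⊆ ‖𝒜‖ⁿ, there exists a reduction 𝒞 of ℬ such that ‖𝒞‖ⁿ_< is either contained in X or disjoint from X, where ‖𝒞‖ⁿ_< = { (𝒞(t₁), …, 𝒞(tₙ)) : t₁, …, tₙ orderly terms with t₁ < ⋯ < tₙ }. -/

import Mathlib

open Function Set

universe u v w

/-- Terms of a purely functional first-order language whose function symbols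
of arity `n` form the type `F n`, with variables indexed by `ℕ`. -/
inductive Tm (F : ℕ → Type u) : Type u
  | var : ℕ → Tm F
  | func : {n : ℕ} → F n → (Fin n → Tm F) → Tm F

namespace Tm

variable {F : ℕ → Type u} {A : Type v} {β : Type w}

/-- The list of (indices of) variables occurring in a term, from left to right. -/
def varList : Tm F → List ℕ
  | .var i => [i]
  | .func (n := n) _ ts => (List.finRange n).flatMap fun i => (ts i).varList

/-- A term is *orderly* if the indices of the variables occurring in it,
read from left to right, are strictly increasing. -/
def Orderly (t : Tm F) : Prop := t.varList.Chain' (· < ·)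

/-- `TermLT s t` iff the index of the last variable of `s` is less than the
index of the first variable of `t`. -/
def TermLT (s t : Tm F) : Prop :=
  ∃ i j, s.varList.getLast? = some i ∧ t.varList.head? = some j ∧ i < j

/-- An infinite sequence of orderly terms is *admissible* iff it is increasing
with respect to `TermLT`. -/
def Admissible (ts : ℕ → Tm F) : Prop :=
  (∀ i, (ts i).Orderly) ∧ ∀ i, TermLT (ts i) (ts (i + 1))

/-- `s.subst σ` replaces each variable `vᵢ` in `s` by `σ i`. -/
def subst (σ : ℕ → Tm F) : Tm F → Tm F
  | .var i => σ i
  | .func f ts => .func f fun i => (ts i).subst σ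

/-- Interpretation of a term in a structure with underlying set `A` whose
interpretation of the function symbols is `I`, under the assignment `a`. -/
def realize (I : ∀ n, F n → (Fin n → A) → A) (a : ℕ → A) : Tm F → A
  | .var i => a i
  | .func (n := n) f ts => I n f fun i => (ts i).realize I a

end Tm

section General

variable {F : ℕ → Type u} {A : Type v} {β : Type w}

/-- `b` is a reduction of `a` (with respect to the algebra `(A, I)`). -/
def SeqReduction (I : ∀ n, F n → (Fin n → A) → A) (b a : ℕ → A) : Prop :=
  ∃ ts : ℕ → Tm F, Tm.Admissible ts ∧ ∀ i, b i = (ts i).realize I a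

/-- The set of finite reductions of `a`. -/
def FR (I : ∀ n, F n → (Fin n → A) → A) (a : ℕ → A) : Set A :=
  { x | ∃ t : Tm F, t.Orderly ∧ x = t.realize I a }

/-- `(A, I)` is a Ramsey algebra. -/
def RamseyAlg (I : ∀ n, F n → (Fin n → A) → A) : Prop :=
  ∀ (a : ℕ → A) (X : Set A),
    ∃ b, SeqReduction I b a ∧ (FR I b ⊆ X ∨ FR I b ∩ X = ∅)

/-- `(A, I)` is Ramsey below `a`. -/
def RamseyBelow (I : ∀ n, F n → (Fin n → A) → A) (a : ℕ → A) : Prop :=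
  ∀ b, SeqReduction I b a → ∀ X : Set A,
    ∃ c, SeqReduction I c b ∧ (FR I c ⊆ X ∨ FR I c ∩ X = ∅)

/-- An increasing tuple `t₁ < t₂ < ⋯ < tₙ` of orderly terms. -/
def OrdTuple {n : ℕ} (t : Fin n → Tm F) : Prop :=
  (∀ i, (t i).Orderly) ∧ ∀ i j : Fin n, i < j → Tm.TermLT (t i) (t j)

/-- `𝒜` (as a function on orderly terms) is an orderly algebra. -/
def IsOrderlyAlg (𝒜 : Tm F → β) : Prop :=
  ∀ (n : ℕ) (f : F n) (t t' : Fin n → Tm F), OrdTuple t → OrdTuple t' →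
    (∀ k, 𝒜 (t k) = 𝒜 (t' k)) → 𝒜 (.func f t) = 𝒜 (.func f t')

/-- The universe of an orderly algebra: its range on orderly terms. -/
def OAUniv (𝒜 : Tm F → β) : Set β := 𝒜 '' { t | t.Orderly }

/-- `ℬ` is a reduction of the orderly algebra `𝒜` (as functions on orderly terms). -/
def OAReduction (ℬ 𝒜 : Tm F → β) : Prop :=
  ∃ ts : ℕ → Tm F, Tm.Admissible ts ∧ ∀ s : Tm F, s.Orderly → ℬ s = 𝒜 (s.subst ts)

/-- `ℬ` is homogeneous for `X`. -/
def Homog (ℬ : Tm F → β) (X : Set β) : Prop :=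
  OAUniv ℬ ⊆ X ∨ OAUniv ℬ ∩ X = ∅

/-- An orderly algebra is weakly Ramsey. -/
def WeaklyRamseyOA (𝒜 : Tm F → β) : Prop :=
  ∀ X ⊆ OAUniv 𝒜, ∃ ℬ, OAReduction ℬ 𝒜 ∧ Homog ℬ X

/-- An orderly algebra is Ramsey. -/
def RamseyOA (𝒜 : Tm F → β) : Prop :=
  ∀ ℬ, OAReduction ℬ 𝒜 → ∀ X ⊆ OAUniv 𝒜, ∃ 𝒞, OAReduction 𝒞 ℬ ∧ Homog 𝒞 X

/-- The orderly algebra induced from the algebra `(A, I)` by the sequence `a`. -/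
def inducedOA (I : ∀ n, F n → (Fin n → A) → A) (a : ℕ → A) : Tm F → A :=
  fun t => t.realize I a

/-- `[FR(c)]ⁿ_<` : increasing `n`-tuples of finite reductions of `c`. -/
def FRtuple (I : ∀ n, F n → (Fin n → A) → A) (n : ℕ) (c : ℕ → A) : Set (Fin n → A) :=
  { x | ∃ t : Fin n → Tm F, OrdTuple t ∧ ∀ i, x i = (t i).realize I c }

/-- `‖𝒞‖ⁿ_<` for an orderly algebra `𝒞`. -/
def OATuple (n : ℕ) (𝒞 : Tm F → β) : Set (Fin n → β) :=
  { x | ∃ t : Fin n → Tm F, OrdTuple t ∧ ∀ i, x i = 𝒞 (t i) }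

/-- The basic set `[n, a]` of the preorder with approximations `(ᵂA, ≤)`. -/
def Approx (I : ∀ n, F n → (Fin n → A) → A) (n : ℕ) (a : ℕ → A) : Set (ℕ → A) :=
  { b | SeqReduction I b a ∧ ∀ i < n, b i = a i }

/-- The natural topology on `ᵂA`, generated by the sets `[n, a]`. -/
def natTop (I : ∀ n, F n → (Fin n → A) → A) : TopologicalSpace (ℕ → A) :=
  TopologicalSpace.generateFrom { S | ∃ n a, S = Approx I n a }

/-- A subset `X ⊆ ᵂA` is Ramsey. -/
def RamseySet (I : ∀ n, F n → (Fin n → A) → A) (X : Set (ℕ → A)) : Prop :=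
  ∀ (n : ℕ) (a : ℕ → A), ∃ b ∈ Approx I n a,
    Approx I n b ⊆ X ∨ Approx I n b ∩ X = ∅

/-- `X` has the property of Baire in the natural topology:
its symmetric difference with some open set is meager. -/
def HasBaireProperty (I : ∀ n, F n → (Fin n → A) → A) (X : Set (ℕ → A)) : Prop :=
  ∃ U : Set (ℕ → A), @IsOpen _ (natTop I) U ∧ @IsMeagre _ (natTop I) (symmDiff X U)

end General

/-- The language with a single binary function symbol. -/
inductive BinF : ℕ → Type
  | f : BinF 2

/-- Application of the binary function symbol: the term `f s t`. -/
def fapp (s t : Tm BinF) : Tm BinF := .func BinF.f ![s, t]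

/-- The interpretation of the single binary function symbol by a binary
operation `g` on `A`. -/
def binI {A : Type v} (g : A → A → A) : ∀ n, BinF n → (Fin n → A) → A
  | _, BinF.f, args => g (args 0) (args 1)

/-- The pair `(tˣ, tʸ)`: `(vᵢˣ, vᵢʸ) = (v_{2i}, v_{2i+1})` and
`((f s t)ˣ, (f s t)ʸ) = (f sˣ sʸ, f tˣ tʸ)`. -/
def xyPair : Tm BinF → Tm BinF × Tm BinF
  | .var i => (.var (2 * i), .var (2 * i + 1))
  | .func BinF.f ts =>
      (fapp (xyPair (ts 0)).1 (xyPair (ts 0)).2, fapp (xyPair (ts 1)).1 (xyPair (ts 1)).2)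

/-- The orderly algebra `♯𝒜`, `♯𝒜(t) = (𝒜(tˣ), 𝒜(tʸ))`. -/
def sharpOA {β : Type w} (𝒜 : Tm BinF → β) : Tm BinF → β × β :=
  fun t => (𝒜 (xyPair t).1, 𝒜 (xyPair t).2)

/-!
Induction on `n`. For the step to `n + 1`, colour the `n`-tuples by `Y b = {x | (b, x) ∈ X}`.
A fusion argument produces one admissible sequence `e` that decides, for every orderly term `s`
whose variables are at most `v_k`, whether the `n`-tuples of `ℬ ∘ e` built from variables
beyond `v_k` all lie in `Y (ℬ (s[e]))` or all avoid it: at stage `k` there are only finitely many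
such `s` (every symbol has arity at least two and the language is finite), and each is handled by
the induction hypothesis applied to the tail of the current sequence beyond `v_k`; the diagonal
of the stages works for all `k` at once. Ramseyness of `𝒜` applied to the set of values that
decide "inside" gives `𝒞`, and then whether `(𝒞 t₀, …, 𝒞 tₙ) ∈ X` depends only on `𝒞 t₀`.
-/

namespace Tm

variable {F : ℕ → Type u}

theorem subst_subst (σ ρ : ℕ → Tm F) (t : Tm F) :
    (t.subst σ).subst ρ = t.subst fun i => (σ i).subst ρ := by
  induction t with
  | var i => rfl
  | func f ts ih => simp only [subst, ih]

theorem subst_congr {σ ρ : ℕ → Tm F} {t : Tm F} (h : ∀ i ∈ t.varList, σ i = ρ i) :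
    t.subst σ = t.subst ρ := by
  induction t with
  | var i => exact h i (List.mem_singleton_self i)
  | func f ts ih =>
    simp only [subst, func.injEq, heq_eq_eq, true_and]
    funext j
    exact ih j fun i hi => h i (List.mem_flatMap.mpr ⟨j, List.mem_finRange j, hi⟩)

@[simp]
theorem subst_var (t : Tm F) : t.subst var = t := by
  induction t with
  | var i => rfl
  | func f ts ih => simp only [subst, ih]

theorem varList_subst (σ : ℕ → Tm F) (t : Tm F) :
    (t.subst σ).varList = t.varList.flatMap fun i => (σ i).varList := by
  induction t with
  | var i => simp [subst, varList]
  | func f ts ih => simp only [subst, varList, List.flatMap_assoc, ih]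

theorem varList_subst_ne_nil {σ : ℕ → Tm F} {t : Tm F} (ht : t.varList ≠ [])
    (hσ : ∀ i, (σ i).varList ≠ []) : (t.subst σ).varList ≠ [] := by
  obtain ⟨i, hi⟩ := List.exists_mem_of_ne_nil _ ht
  rw [varList_subst]
  exact fun h => hσ i (List.flatMap_eq_nil_iff.mp h i hi)

def VarsLE (t : Tm F) (k : ℕ) : Prop := ∀ v ∈ t.varList, v ≤ k

def VarsGT (t : Tm F) (k : ℕ) : Prop := ∀ v ∈ t.varList, k < v

def Precedes (s t : Tm F) : Prop := ∀ i ∈ s.varList, ∀ j ∈ t.varList, i < j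

def lastVar (t : Tm F) : ℕ := t.varList.getLast?.getD 0

theorem orderly_iff_pairwise {t : Tm F} : t.Orderly ↔ t.varList.Pairwise (· < ·) :=
  List.isChain_iff_pairwise

theorem orderly_var (i : ℕ) : (var i : Tm F).Orderly := List.isChain_singleton i

theorem Orderly.le_of_getLast? {t : Tm F} {a i : ℕ} (ht : t.Orderly)
    (ha : t.varList.getLast? = some a) (hi : i ∈ t.varList) : i ≤ a := by
  obtain ⟨l, hl⟩ := List.getLast?_eq_some_iff.mp ha
  rw [orderly_iff_pairwise, hl, List.pairwise_append] at ht
  rw [hl, List.mem_append, List.mem_singleton] at hi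
  rcases hi with hi | rfl
  · exact (ht.2.2 i hi a (List.mem_singleton_self a)).le
  · exact le_rfl

theorem Orderly.le_of_head? {t : Tm F} {a i : ℕ} (ht : t.Orderly)
    (ha : t.varList.head? = some a) (hi : i ∈ t.varList) : a ≤ i := by
  obtain ⟨l, hl⟩ := List.head?_eq_some_iff.mp ha
  rw [orderly_iff_pairwise, hl, List.pairwise_cons] at ht
  rw [hl, List.mem_cons] at hi
  rcases hi with rfl | hi
  · exact le_rfl
  · exact (ht.1 i hi).le

theorem Orderly.varsLE_lastVar {t : Tm F} (ht : t.Orderly) : t.VarsLE t.lastVar := fun i hi => by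
  have hlast := List.getLast?_eq_some_getLast (List.ne_nil_of_mem hi)
  rw [lastVar, hlast, Option.getD_some]
  exact ht.le_of_getLast? hlast hi

theorem TermLT.varsGT_lastVar {s t : Tm F} (ht : t.Orderly) (h : TermLT s t) :
    t.VarsGT s.lastVar := by
  obtain ⟨a, b, ha, hb, hab⟩ := h
  intro v hv
  simpa [lastVar, ha] using hab.trans_le (ht.le_of_head? hb hv)

theorem TermLT.precedes {s t : Tm F} (hs : s.Orderly) (ht : t.Orderly) (h : TermLT s t) :
    s.Precedes t := by
  obtain ⟨a, b, ha, hb, hab⟩ := h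
  exact fun i hi j hj => ((hs.le_of_getLast? ha hi).trans_lt hab).trans_le (ht.le_of_head? hb hj)

theorem TermLT.varList_ne_nil_left {s t : Tm F} (h : TermLT s t) : s.varList ≠ [] := by
  obtain ⟨a, -, ha, -⟩ := h
  exact List.ne_nil_of_mem (List.mem_of_getLast? ha)

theorem TermLT.varList_ne_nil_right {s t : Tm F} (h : TermLT s t) : t.varList ≠ [] := by
  obtain ⟨-, b, -, hb, -⟩ := h
  exact List.ne_nil_of_mem (List.mem_of_head? hb)

theorem termLT_of_precedes {s t : Tm F} (hs : s.varList ≠ []) (ht : t.varList ≠ [])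
    (h : s.Precedes t) : TermLT s t :=
  ⟨_, _, List.getLast?_eq_some_getLast hs, List.head?_eq_some_head ht,
    h _ (List.getLast_mem hs) _ (List.head_mem ht)⟩

theorem Precedes.trans {s t u : Tm F} (hst : s.Precedes t) (htu : t.Precedes u)
    (ht : t.varList ≠ []) : s.Precedes u := by
  obtain ⟨j, hj⟩ := List.exists_mem_of_ne_nil _ ht
  exact fun i hi l hl => (hst i hi j hj).trans (htu j hj l hl)

theorem Precedes.subst {s t : Tm F} {σ : ℕ → Tm F} (h : s.Precedes t)
    (hσ : ∀ i ∈ s.varList, ∀ j ∈ t.varList, i < j → (σ i).Precedes (σ j)) :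
    (s.subst σ).Precedes (t.subst σ) := by
  intro x hx y hy
  rw [varList_subst, List.mem_flatMap] at hx hy
  obtain ⟨i, hi, hxi⟩ := hx
  obtain ⟨j, hj, hyj⟩ := hy
  exact hσ i hi j hj (h i hi j hj) x hxi y hyj

theorem Orderly.subst {t : Tm F} {σ : ℕ → Tm F} (ht : t.Orderly)
    (hσ : ∀ i ∈ t.varList, (σ i).Orderly)
    (hlt : ∀ i ∈ t.varList, ∀ j ∈ t.varList, i < j → (σ i).Precedes (σ j)) :
    (t.subst σ).Orderly := by
  rw [orderly_iff_pairwise, varList_subst, List.pairwise_flatMap]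
  exact ⟨fun i hi => orderly_iff_pairwise.mp (hσ i hi),
    (orderly_iff_pairwise.mp ht).imp_of_mem fun hi hj hij => hlt _ hi _ hj hij⟩

theorem TermLT.subst {s t : Tm F} {σ : ℕ → Tm F} (hs : s.Orderly) (ht : t.Orderly)
    (h : TermLT s t) (hne : ∀ i, (σ i).varList ≠ [])
    (hσ : ∀ i ∈ s.varList, ∀ j ∈ t.varList, i < j → (σ i).Precedes (σ j)) :
    TermLT (s.subst σ) (t.subst σ) :=
  termLT_of_precedes (varList_subst_ne_nil h.varList_ne_nil_left hne)
    (varList_subst_ne_nil h.varList_ne_nil_right hne)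
    ((h.precedes hs ht).subst hσ)

variable {σ τ : ℕ → Tm F}

theorem admissible_var : Admissible (F := F) var :=
  ⟨orderly_var, fun i => ⟨i, i + 1, rfl, rfl, i.lt_succ_self⟩⟩

theorem Admissible.varList_ne_nil (h : Admissible σ) (i : ℕ) : (σ i).varList ≠ [] :=
  (h.2 i).varList_ne_nil_left

theorem Admissible.precedes (h : Admissible σ) {i j : ℕ} (hij : i < j) :
    (σ i).Precedes (σ j) := by
  induction j, hij using Nat.le_induction with
  | base => exact (h.2 i).precedes (h.1 i) (h.1 _)
  | succ j _ ih => exact ih.trans ((h.2 j).precedes (h.1 j) (h.1 _)) (h.varList_ne_nil j)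

theorem Admissible.orderly_subst (hσ : Admissible σ) {t : Tm F} (ht : t.Orderly) :
    (t.subst σ).Orderly :=
  ht.subst (fun i _ => hσ.1 i) fun _ _ _ _ => hσ.precedes

theorem Admissible.termLT_subst (hσ : Admissible σ) {s t : Tm F} (hs : s.Orderly)
    (ht : t.Orderly) (h : TermLT s t) : TermLT (s.subst σ) (t.subst σ) :=
  h.subst hs ht hσ.varList_ne_nil fun _ _ _ _ => hσ.precedes

theorem Admissible.ordTuple_subst (hσ : Admissible σ) {n : ℕ} {t : Fin n → Tm F}
    (ht : OrdTuple t) : OrdTuple fun j => (t j).subst σ :=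
  ⟨fun j => hσ.orderly_subst (ht.1 j),
    fun i j hij => hσ.termLT_subst (ht.1 i) (ht.1 j) (ht.2 i j hij)⟩

theorem Admissible.subst (hσ : Admissible σ) (hτ : Admissible τ) :
    Admissible fun i => (τ i).subst σ :=
  ⟨fun i => hσ.orderly_subst (hτ.1 i), fun i => hσ.termLT_subst (hτ.1 i) (hτ.1 _) (hτ.2 i)⟩

theorem Admissible.shift (h : Admissible σ) (m : ℕ) : Admissible fun i => σ (m + i) :=
  ⟨fun _ => h.1 _, fun i => h.2 (m + i)⟩

theorem Admissible.varsGT_subst (hσ : Admissible σ) {k : ℕ} (hk : σ k = var k) {t : Tm F}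
    (ht : t.VarsGT k) : (t.subst σ).VarsGT k := by
  intro v hv
  rw [varList_subst, List.mem_flatMap] at hv
  obtain ⟨i, hi, hv⟩ := hv
  have hki := hσ.precedes (ht i hi)
  rw [hk] at hki
  exact hki k (List.mem_singleton_self k) v hv

variable {g g' g'' e : ℕ → Tm F} {k : ℕ}

def extend (g : ℕ → Tm F) (k : ℕ) (τ : ℕ → Tm F) (i : ℕ) : Tm F :=
  if i ≤ k then g i else (τ (i - (k + 1))).subst fun j => g (k + 1 + j)

theorem extend_of_le {i : ℕ} (hi : i ≤ k) : extend g k τ i = g i := if_pos hi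

theorem extend_add (i : ℕ) :
    extend g k τ (k + 1 + i) = (τ i).subst fun j => g (k + 1 + j) := by
  rw [extend, if_neg (by omega), Nat.add_sub_cancel_left]

theorem Admissible.extend (hg : Admissible g) (hτ : Admissible τ) (k : ℕ) :
    Admissible (extend g k τ) := by
  have hsh := hg.shift (k + 1)
  refine ⟨fun i => ?_, fun i => ?_⟩
  · rcases le_or_gt i k with hi | hi
    · rw [extend_of_le hi]; exact hg.1 i
    · obtain ⟨j, rfl⟩ := Nat.exists_eq_add_of_le hi
      rw [extend_add]; exact hsh.orderly_subst (hτ.1 j)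
  rcases lt_trichotomy i k with hi | rfl | hi
  · rw [extend_of_le hi.le, extend_of_le hi]; exact hg.2 i
  · rw [extend_of_le le_rfl, ← add_zero (i + 1), extend_add]
    refine termLT_of_precedes (hg.varList_ne_nil i)
      (varList_subst_ne_nil (hτ.varList_ne_nil 0) hsh.varList_ne_nil) fun a ha b hb => ?_
    rw [varList_subst, List.mem_flatMap] at hb
    obtain ⟨j, -, hb⟩ := hb
    exact hg.precedes (by omega) a ha b hb
  · obtain ⟨j, rfl⟩ := Nat.exists_eq_add_of_le hi
    rw [extend_add, add_assoc, extend_add]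
    exact hsh.termLT_subst (hτ.1 j) (hτ.1 _) (hτ.2 j)

def Refines (k : ℕ) (g' g : ℕ → Tm F) : Prop :=
  ∃ δ : ℕ → Tm F, Admissible δ ∧ (∀ i ≤ k, δ i = var i) ∧ ∀ i, g' i = (δ i).subst g

theorem Refines.refl (k : ℕ) (g : ℕ → Tm F) : Refines k g g :=
  ⟨var, admissible_var, fun _ _ => rfl, fun _ => rfl⟩

theorem Refines.trans (h₁ : Refines k g'' g') (h₂ : Refines k g' g) : Refines k g'' g := by
  obtain ⟨δ₁, hδ₁, hfix₁, hg''⟩ := h₁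
  obtain ⟨δ₂, hδ₂, hfix₂, hg'⟩ := h₂
  refine ⟨fun i => (δ₁ i).subst δ₂, hδ₂.subst hδ₁, fun i hi => ?_, fun i => ?_⟩
  · simp only [hfix₁ i hi, subst, hfix₂ i hi]
  · rw [hg'', subst_subst, (funext hg' : g' = _)]

theorem Refines.mono {m : ℕ} (h : Refines m g' g) (hkm : k ≤ m) : Refines k g' g :=
  let ⟨δ, hδ, hfix, hg'⟩ := h
  ⟨δ, hδ, fun i hi => hfix i (hi.trans hkm), hg'⟩

theorem Refines.apply_eq (h : Refines k g' g) {i : ℕ} (hi : i ≤ k) : g' i = g i := by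
  obtain ⟨δ, -, hfix, hg'⟩ := h
  rw [hg', hfix i hi]; rfl

theorem Refines.admissible (h : Refines k g' g) (hg : Admissible g) : Admissible g' := by
  obtain ⟨δ, hδ, -, hg'⟩ := h
  rw [(funext hg' : g' = _)]
  exact hg.subst hδ

theorem refines_extend (hτ : Admissible τ) : Refines k (extend g k τ) g := by
  refine ⟨extend var k τ, admissible_var.extend hτ k, fun i hi => extend_of_le hi, fun i => ?_⟩
  rcases le_or_gt i k with hi | hi
  · rw [extend_of_le hi, extend_of_le hi]; rfl
  · obtain ⟨j, rfl⟩ := Nat.exists_eq_add_of_le hi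
    rw [extend_add, extend_add, subst_subst]; rfl

/-- What survives of `Refines k · g` in the diagonal limit of a fusion sequence. -/
def RefinesInLimit (k : ℕ) (e g : ℕ → Tm F) : Prop :=
  ∀ M, ∃ g', Refines k g' g ∧ ∀ i < M, g' i = e i

theorem Refines.refinesInLimit (h : Refines k g' g) : RefinesInLimit k g' g :=
  fun _ => ⟨g', h, fun _ _ => rfl⟩

theorem RefinesInLimit.subst_eq (h : RefinesInLimit k e g) {s : Tm F} (hs : s.VarsLE k) :
    s.subst e = s.subst g := by
  obtain ⟨g', hg', hagree⟩ := h (k + 1)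
  exact subst_congr fun i hi => by
    rw [← hagree i (Nat.lt_succ_of_le (hs i hi)), hg'.apply_eq (hs i hi)]


def depth : Tm F → ℕ
  | .var _ => 0
  | .func (n := n) _ ts => (Finset.univ.sup fun i : Fin n => (ts i).depth) + 1

theorem length_varList_func {m : ℕ} (f : F m) (ts : Fin m → Tm F) :
    (func f ts).varList.length = ∑ i, (ts i).varList.length := by
  rw [varList, List.length_flatMap, ← List.ofFn_eq_map, List.sum_ofFn]

theorem depth_lt_length_varList [IsEmpty (F 0)] [IsEmpty (F 1)] (t : Tm F) :
    t.depth < t.varList.length := by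
  induction t with
  | var i => simp [depth, varList]
  | @func m f ts ih =>
    have : Nontrivial (Fin m) := Fin.nontrivial_iff_two_le.mpr <| by
      rcases m with _ | _ | m
      · exact isEmptyElim f
      · exact isEmptyElim f
      · omega
    obtain ⟨i, -, hi⟩ := Finset.exists_mem_eq_sup _ Finset.univ_nonempty fun i => (ts i).depth
    obtain ⟨j, hji⟩ := exists_ne i
    have hpair := Finset.sum_le_sum_of_subset (f := fun i => (ts i).varList.length)
      (Finset.subset_univ {i, j})
    rw [Finset.sum_pair hji.symm] at hpair
    rw [depth, hi, length_varList_func]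
    have := ih i; have := ih j
    omega

theorem finite_setOf_varsLE_depth_le [Finite (Σ n, F n)] (k d : ℕ) :
    {t : Tm F | t.VarsLE k ∧ t.depth ≤ d}.Finite := by
  induction d with
  | zero =>
    refine ((Set.finite_Iic k).image var).subset ?_
    rintro (i | ⟨f, ts⟩) ⟨hk, hd⟩
    · exact ⟨i, hk i (List.mem_singleton_self i), rfl⟩
    · simp [depth] at hd
  | succ d ih =>
    refine (((Set.finite_Iic k).image var).union <| Set.finite_iUnion fun p : Σ n, F n =>
      (Set.Finite.pi' fun _ : Fin p.1 => ih).image (func p.2)).subset ?_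
    rintro (i | @⟨m, f, ts⟩) ⟨hk, hd⟩
    · exact Or.inl ⟨i, hk i (List.mem_singleton_self i), rfl⟩
    refine Or.inr (Set.mem_iUnion.mpr ⟨⟨m, f⟩, ts, fun i => ⟨fun v hv => hk v ?_, ?_⟩, rfl⟩)
    · exact List.mem_flatMap.mpr ⟨i, List.mem_finRange i, hv⟩
    · have := Finset.le_sup (f := fun i => (ts i).depth) (Finset.mem_univ i)
      simp only [depth] at hd
      omega

theorem finite_setOf_orderly_varsLE [IsEmpty (F 0)] [IsEmpty (F 1)] [Finite (Σ n, F n)]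
    (k : ℕ) : {t : Tm F | t.Orderly ∧ t.VarsLE k}.Finite := by
  refine (finite_setOf_varsLE_depth_le k k).subset fun t ⟨ht, hk⟩ => ⟨hk, ?_⟩
  have hlen : t.varList.length ≤ k + 1 := by
    have hnodup := (orderly_iff_pairwise.mp ht).imp ne_of_lt
    rw [← List.toFinset_card_of_nodup hnodup, ← Finset.card_range (k + 1)]
    exact Finset.card_le_card fun v hv =>
      Finset.mem_range.mpr (Nat.lt_succ_of_le (hk v (List.mem_toFinset.mp hv)))
  have := depth_lt_length_varList t
  omega

end Tm

section Reduction

variable {F : ℕ → Type u} {β : Type w} {𝒜 ℬ 𝒞 : Tm F → β}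

theorem OAReduction.refl (ℬ : Tm F → β) : OAReduction ℬ ℬ :=
  ⟨Tm.var, Tm.admissible_var, fun s _ => by rw [Tm.subst_var]⟩

theorem OAReduction.trans (h₁ : OAReduction 𝒞 ℬ) (h₂ : OAReduction ℬ 𝒜) :
    OAReduction 𝒞 𝒜 := by
  obtain ⟨τ, hτ, h𝒞⟩ := h₁
  obtain ⟨σ, hσ, hℬ⟩ := h₂
  refine ⟨fun i => (τ i).subst σ, hσ.subst hτ, fun s hs => ?_⟩
  rw [h𝒞 s hs, hℬ _ (hτ.orderly_subst hs), Tm.subst_subst]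

theorem OAReduction.oaUniv_subset (h : OAReduction ℬ 𝒜) : OAUniv ℬ ⊆ OAUniv 𝒜 := by
  obtain ⟨σ, hσ, hℬ⟩ := h
  rintro _ ⟨s, hs, rfl⟩
  exact ⟨s.subst σ, hσ.orderly_subst hs, (hℬ s hs).symm⟩

theorem oaTuple_congr {n : ℕ} (h : ∀ t : Tm F, t.Orderly → ℬ t = 𝒞 t) :
    OATuple n ℬ = OATuple n 𝒞 := by
  ext x
  refine exists_congr fun t => and_congr_right fun ht => ?_
  simp only [h _ (ht.1 _)]

end Reduction

section TuplesAbove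

open Tm

variable {F : ℕ → Type u} {β : Type w} {n k : ℕ}

def OATupleAbove (n k : ℕ) (𝒟 : Tm F → β) : Set (Fin n → β) :=
  {x | ∃ t : Fin n → Tm F, OrdTuple t ∧ (∀ j, (t j).VarsGT k) ∧ ∀ j, x j = 𝒟 (t j)}

theorem oaTupleAbove_nonempty (𝒟 : Tm F → β) : (OATupleAbove n k 𝒟).Nonempty := by
  refine ⟨_, fun j => var (k + 1 + j), ⟨fun j => orderly_var _, fun i j hij => ?_⟩,
    fun j v hv => ?_, fun _ => rfl⟩
  · exact ⟨_, _, rfl, rfl, by simp [Fin.lt_def.mp hij]⟩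
  · rw [varList, List.mem_singleton] at hv; omega

theorem oaTupleAbove_anti {k' : ℕ} (h : k ≤ k') (𝒟 : Tm F → β) :
    OATupleAbove n k' 𝒟 ⊆ OATupleAbove n k 𝒟 := by
  rintro x ⟨t, ht, hk', hx⟩
  exact ⟨t, ht, fun j v hv => h.trans_lt (hk' j v hv), hx⟩

theorem oaTupleAbove_subset_oaTuple (𝒟 : Tm F → β) :
    OATupleAbove n k 𝒟 ⊆ OATuple n fun t => 𝒟 (t.subst fun i => var (k + 1 + i)) := by
  rintro x ⟨t, ht, hk, hx⟩
  let ρ : ℕ → Tm F := fun v => var (v - (k + 1))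
  have hρ : ∀ a b, k < a → a < b → (ρ a).Precedes (ρ b) := fun a b hka hab a' ha' b' hb' => by
    simp only [ρ, varList, List.mem_singleton] at ha' hb'
    omega
  refine ⟨fun j => (t j).subst ρ, ⟨fun j => (ht.1 j).subst (fun _ _ => orderly_var _)
    fun a ha b _ => hρ a b (hk j a ha), fun i j hij => (ht.2 i j hij).subst (ht.1 i) (ht.1 j)
    (fun _ => List.cons_ne_nil _ _) fun a ha b _ => hρ a b (hk i a ha)⟩,
    fun j => (hx j).trans (congrArg 𝒟 ?_)⟩
  rw [subst_subst]
  conv_lhs => rw [← subst_var (t j)]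
  exact subst_congr fun v hv => by simp only [ρ, subst]; congr 1; have := hk j v hv; omega

theorem exists_of_mem_oaTuple_succ {𝒞 𝒟 : Tm F → β} (h : OAReduction 𝒞 𝒟)
    {x : Fin (n + 1) → β} (hx : x ∈ OATuple (n + 1) 𝒞) :
    ∃ s k, s.Orderly ∧ s.VarsLE k ∧ x 0 = 𝒟 s ∧ Fin.tail x ∈ OATupleAbove n k 𝒟 := by
  obtain ⟨τ, hτ, h𝒞⟩ := h
  obtain ⟨t, ht, hx⟩ := hx
  have hu := hτ.ordTuple_subst ht
  refine ⟨(t 0).subst τ, ((t 0).subst τ).lastVar, hu.1 0, (hu.1 0).varsLE_lastVar,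
    (hx 0).trans (h𝒞 _ (ht.1 0)), fun j => (t j.succ).subst τ,
    ⟨fun j => hu.1 j.succ, fun i j hij => hu.2 _ _ (Fin.succ_lt_succ_iff.mpr hij)⟩,
    fun j => (hu.2 0 j.succ (Fin.succ_pos j)).varsGT_lastVar (hu.1 j.succ),
    fun j => (hx j.succ).trans (h𝒞 _ (ht.1 j.succ))⟩

theorem Tm.RefinesInLimit.oaTupleAbove_subset {e g : ℕ → Tm F} (h : RefinesInLimit k e g)
    (ℬ : Tm F → β) :
    OATupleAbove n k (fun t => ℬ (t.subst e)) ⊆ OATupleAbove n k fun t => ℬ (t.subst g) := by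
  rintro x ⟨t, ht, hk, hx⟩
  obtain ⟨M, hM⟩ := (Finset.univ.biUnion fun j => (t j).varList.toFinset).exists_nat_subset_range
  obtain ⟨g', ⟨δ, hδ, hfix, hg'⟩, hagree⟩ := h M
  refine ⟨fun j => (t j).subst δ, hδ.ordTuple_subst ht,
    fun j => hδ.varsGT_subst (hfix k le_rfl) (hk j), fun j => (hx j).trans (congrArg ℬ ?_)⟩
  rw [subst_subst]
  refine subst_congr fun i hi => ?_
  rw [← hagree i (Finset.mem_range.mp (hM (by simpa using ⟨j, hi⟩))), hg']

end TuplesAbove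

def SubsetOrDisjoint {α : Type*} (A W : Set α) : Prop := A ⊆ W ∨ Disjoint A W

theorem SubsetOrDisjoint.mono {α : Type*} {A A' W : Set α} (h : SubsetOrDisjoint A W)
    (hA : A' ⊆ A) : SubsetOrDisjoint A' W :=
  h.imp hA.trans fun hd => hd.mono_left hA

section Fusion

open Tm

variable {F : ℕ → Type u} {β : Type w} {n k : ℕ} {𝒜 ℬ : Tm F → β}
  {Y : β → Set (Fin n → β)} {g e : ℕ → Tm F}

def Decides (ℬ : Tm F → β) (Y : β → Set (Fin n → β)) (g : ℕ → Tm F) (k : ℕ) (s : Tm F) :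
    Prop :=
  SubsetOrDisjoint (OATupleAbove n k fun t => ℬ (t.subst g)) (Y (ℬ (s.subst g)))

theorem Decides.of_refinesInLimit {s : Tm F} (h : Decides ℬ Y g k s) (hs : s.VarsLE k)
    (he : RefinesInLimit k e g) : Decides ℬ Y e k s := by
  unfold Decides
  rw [he.subst_eq hs]
  exact h.mono (he.oaTupleAbove_subset ℬ)

theorem Decides.subset_of_subset {k' : ℕ} {s : Tm F} (h : Decides ℬ Y g k s)
    (h' : OATupleAbove n k' (fun t => ℬ (t.subst g)) ⊆ Y (ℬ (s.subst g))) :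
    OATupleAbove n k (fun t => ℬ (t.subst g)) ⊆ Y (ℬ (s.subst g)) := by
  refine h.resolve_right fun hdisj => ?_
  obtain ⟨x, hx⟩ := oaTupleAbove_nonempty (n := n) (k := max k k') fun t => ℬ (t.subst g)
  exact hdisj.notMem_of_mem_left (oaTupleAbove_anti (le_max_left _ _) _ hx)
    (h' (oaTupleAbove_anti (le_max_right _ _) _ hx))

def TupleRamsey (n : ℕ) (𝒜 : Tm F → β) : Prop :=
  ∀ ℬ, OAReduction ℬ 𝒜 → ∀ X : Set (Fin n → β), X ⊆ {x | ∀ i, x i ∈ OAUniv 𝒜} →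
    ∃ 𝒞, OAReduction 𝒞 ℬ ∧ (OATuple n 𝒞 ⊆ X ∨ OATuple n 𝒞 ∩ X = ∅)

theorem TupleRamsey.exists_refines_subsetOrDisjoint (ih : TupleRamsey n 𝒜) (hℬ : OAReduction ℬ 𝒜)
    (hg : Admissible g) (k : ℕ) {W : Set (Fin n → β)} (hW : W ⊆ {x | ∀ i, x i ∈ OAUniv 𝒜}) :
    ∃ g', Refines k g' g ∧ SubsetOrDisjoint (OATupleAbove n k fun t => ℬ (t.subst g')) W := by
  let tail := fun j => g (k + 1 + j)
  have htail : OAReduction (fun t => ℬ (t.subst tail)) ℬ := ⟨tail, hg.shift _, fun _ _ => rfl⟩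
  obtain ⟨𝒞, ⟨τ, hτ, h𝒞⟩, hhom⟩ := ih _ (htail.trans hℬ) W hW
  refine ⟨extend g k τ, refines_extend hτ, SubsetOrDisjoint.mono
    (hhom.imp_right Set.disjoint_iff_inter_eq_empty.mpr) ?_⟩
  refine (oaTupleAbove_subset_oaTuple _).trans (oaTuple_congr fun t ht => ?_).le
  simp only [h𝒞 t ht, subst_subst, subst, extend_add, tail]

theorem TupleRamsey.exists_refines_forall_decides (ih : TupleRamsey n 𝒜) (hℬ : OAReduction ℬ 𝒜)
    (hY : ∀ b, Y b ⊆ {x | ∀ i, x i ∈ OAUniv 𝒜}) (hg : Admissible g) (S : Finset (Tm F))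
    (hS : ∀ s ∈ S, s.VarsLE k) : ∃ g', Refines k g' g ∧ ∀ s ∈ S, Decides ℬ Y g' k s := by
  classical
  induction S using Finset.induction_on with
  | empty => exact ⟨g, .refl k g, by simp⟩
  | insert s S _ ihS =>
    obtain ⟨g₁, hg₁, hS₁⟩ := ihS fun s' hs' => hS s' (Finset.mem_insert_of_mem hs')
    obtain ⟨g₂, hg₂, hdec⟩ :=
      ih.exists_refines_subsetOrDisjoint hℬ (hg₁.admissible hg) k (hY (ℬ (s.subst g₁)))
    have hs := hS s (Finset.mem_insert_self s S)
    refine ⟨g₂, hg₂.trans hg₁, (Finset.forall_mem_insert _ _ _).mpr ⟨?_, fun s' hs' =>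
      (hS₁ s' hs').of_refinesInLimit (hS s' (Finset.mem_insert_of_mem hs'))
        hg₂.refinesInLimit⟩⟩
    unfold Decides
    rwa [hg₂.refinesInLimit.subst_eq hs]

theorem exists_admissible_refinesInLimit (P : ℕ → (ℕ → Tm F) → Prop)
    (hstep : ∀ k g, Admissible g → ∃ g', Refines k g' g ∧ P k g') :
    ∃ e, Admissible e ∧ ∀ k, ∃ g, P k g ∧ RefinesInLimit k e g := by
  choose! next hnext using hstep
  let G : ℕ → ℕ → Tm F := fun m => Nat.rec var (fun k g => next k g) m
  have hG : ∀ m, Admissible (G m) := fun m => by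
    induction m with
    | zero => exact admissible_var
    | succ m ih => exact (hnext m _ ih).1.admissible ih
  have hrefines : ∀ k m, k < m → Refines k (G m) (G (k + 1)) := fun k m hkm => by
    induction m, hkm using Nat.le_induction with
    | base => exact .refl k _
    | succ m hkm ih => exact ((hnext m _ (hG m)).1.mono (by omega)).trans ih
  have hstable : ∀ i m, i < m → G m i = G (i + 1) i := fun i m him => by
    induction m, him using Nat.le_induction with
    | base => rfl
    | succ m him ih => exact ((hnext m _ (hG m)).1.apply_eq (by omega)).trans ih
  refine ⟨fun i => G (i + 1) i, ⟨fun i => (hG (i + 1)).1 i, fun i => ?_⟩, fun k =>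
    ⟨G (k + 1), (hnext k _ (hG k)).2, fun M => ⟨G (max M (k + 1)),
      hrefines k _ (by omega), fun i hi => hstable i _ (by omega)⟩⟩⟩
  show TermLT (G (i + 1) i) (G (i + 2) (i + 1))
  rw [← hstable i (i + 2) (by omega)]
  exact (hG (i + 2)).2 i

theorem TupleRamsey.exists_admissible_forall_decides [IsEmpty (F 0)] [IsEmpty (F 1)]
    [Finite (Σ n, F n)] (ih : TupleRamsey n 𝒜) (hℬ : OAReduction ℬ 𝒜)
    (hY : ∀ b, Y b ⊆ {x | ∀ i, x i ∈ OAUniv 𝒜}) :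
    ∃ e, Admissible e ∧ ∀ k (s : Tm F), s.Orderly → s.VarsLE k → Decides ℬ Y e k s := by
  obtain ⟨e, he, hlim⟩ := exists_admissible_refinesInLimit
    (fun k g => ∀ s : Tm F, s.Orderly → s.VarsLE k → Decides ℬ Y g k s) fun k g hg => by
      obtain ⟨g', hg', hdec⟩ := ih.exists_refines_forall_decides hℬ hY hg
        (finite_setOf_orderly_varsLE k).toFinset fun s hs => ((Set.Finite.mem_toFinset _).mp hs).2
      exact ⟨g', hg', fun s hs hsk => hdec s ((Set.Finite.mem_toFinset _).mpr ⟨hs, hsk⟩)⟩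
  refine ⟨e, he, fun k s hs hsk => ?_⟩
  obtain ⟨g, hg, hge⟩ := hlim k
  exact (hg s hs hsk).of_refinesInLimit hsk hge

theorem tupleRamsey_zero (𝒜 : Tm F → β) : TupleRamsey 0 𝒜 := by
  intro ℬ _ X _
  refine ⟨ℬ, .refl ℬ, ?_⟩
  rcases X.eq_empty_or_nonempty with rfl | ⟨x, hx⟩
  · exact Or.inr (Set.inter_empty _)
  · exact Or.inl fun y _ => Subsingleton.elim x y ▸ hx

theorem TupleRamsey.succ [IsEmpty (F 0)] [IsEmpty (F 1)] [Finite (Σ n, F n)]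
    (hR : RamseyOA 𝒜) (ih : TupleRamsey n 𝒜) : TupleRamsey (n + 1) 𝒜 := by
  intro ℬ hℬ X hX
  let Y : β → Set (Fin n → β) := fun b => {x | Fin.cons b x ∈ X}
  have hY : ∀ b, Y b ⊆ {x | ∀ i, x i ∈ OAUniv 𝒜} := fun b x hx i => by
    simpa using hX hx i.succ
  obtain ⟨e, he, hdec⟩ := ih.exists_admissible_forall_decides hℬ hY
  let 𝒟 : Tm F → β := fun t => ℬ (t.subst e)
  have h𝒟 : OAReduction 𝒟 ℬ := ⟨e, he, fun _ _ => rfl⟩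
  let Z : Set β := {b | ∃ s k, s.Orderly ∧ s.VarsLE k ∧ 𝒟 s = b ∧ OATupleAbove n k 𝒟 ⊆ Y b}
  have hZ : Z ⊆ OAUniv 𝒜 := by
    rintro _ ⟨s, k, hs, -, rfl, -⟩
    exact (h𝒟.trans hℬ).oaUniv_subset ⟨s, hs, rfl⟩
  obtain ⟨𝒞, h𝒞, hhom⟩ := hR 𝒟 (h𝒟.trans hℬ) Z hZ
  have hmem : ∀ x ∈ OATuple (n + 1) 𝒞, x 0 ∈ OAUniv 𝒞 ∧ (x ∈ X ↔ x 0 ∈ Z) := by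
    intro x hx
    obtain ⟨s, k, hs, hsk, hx0, htail⟩ := exists_of_mem_oaTuple_succ h𝒞 hx
    have hxX : x ∈ X ↔ Fin.tail x ∈ Y (x 0) := by simp [Y, Fin.cons_self_tail]
    obtain ⟨t, ht, hxt⟩ := hx
    refine ⟨hxt 0 ▸ ⟨t 0, ht.1 0, rfl⟩, hxX.trans ⟨fun hxY => ?_, ?_⟩⟩
    · refine ⟨s, k, hs, hsk, hx0.symm, ?_⟩
      rw [hx0] at hxY ⊢
      exact (hdec k s hs hsk).resolve_right fun hdisj => hdisj.notMem_of_mem_left htail hxY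
    · rintro ⟨-, k', -, -, -, hsub⟩
      rw [hx0] at hsub ⊢
      exact (hdec k s hs hsk).subset_of_subset hsub htail
  refine ⟨𝒞, h𝒞.trans h𝒟, hhom.imp (fun hsub x hx => ?_) fun hdisj => ?_⟩
  · exact ((hmem x hx).2).mpr (hsub (hmem x hx).1)
  · refine Set.eq_empty_of_forall_notMem fun x ⟨hx, hxX⟩ => ?_
    exact (Set.eq_empty_iff_forall_notMem.mp hdisj) _ ⟨(hmem x hx).1, ((hmem x hx).2).mp hxX⟩

end Fusion

theorem milliken_taylor_orderly_general {F : ℕ → Type u} [IsEmpty (F 0)]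
    [IsEmpty (F 1)] [Finite (Σ n, F n)] {β : Type w}
    (𝒜 : Tm F → β) (hR : RamseyOA 𝒜) :
    ∀ ℬ, OAReduction ℬ 𝒜 → ∀ (n : ℕ) (X : Set (Fin n → β)),
      X ⊆ { x | ∀ i, x i ∈ OAUniv 𝒜 } →
      ∃ 𝒞, OAReduction 𝒞 ℬ ∧ (OATuple n 𝒞 ⊆ X ∨ OATuple n 𝒞 ∩ X = ∅) := by
  have hn : ∀ n, TupleRamsey n 𝒜 := fun n =>
    Nat.rec (tupleRamsey_zero 𝒜) (fun _ ih => ih.succ hR) n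
  exact fun ℬ hℬ n => hn n ℬ hℬ

/-- If an orderly algebra (over a finite language with no
nullary and no unary function symbols) is Ramsey, then for every reduction
`ℬ`, every `n` and every `X ⊆ ‖𝒜‖ⁿ` there is a reduction `𝒞` of `ℬ` with
`‖𝒞‖ⁿ_<` contained in or disjoint from `X`. -/
theorem milliken_taylor_orderly {F : ℕ → Type u} [IsEmpty (F 0)]
    [IsEmpty (F 1)] [Finite (Σ n, F n)] {β : Type w}
    (𝒜 : Tm F → β) (h𝒜 : IsOrderlyAlg 𝒜) (hR : RamseyOA 𝒜) :
    ∀ ℬ, OAReduction ℬ 𝒜 → ∀ (n : ℕ) (X : Set (Fin n → β)),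
      X ⊆ { x | ∀ i, x i ∈ OAUniv 𝒜 } →
      ∃ 𝒞, OAReduction 𝒞 ℬ ∧ (OATuple n 𝒞 ⊆ X ∨ OATuple n 𝒞 ∩ X = ∅) :=
  milliken_taylor_orderly_general 𝒜 hR
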